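/- arXiv:chao-dyn/9705010 — 2 statements merged into one kernel-verified Lean document; each statement's English description precedes it below -/
import Mathlib

section
/- The origin is an asymptotically stable equilibrium of the system ẋ = x y + x³, ẏ = −y − 2x²: there exists δ > 0 such that every solution with ‖(x(0), y(0))‖ < δ exists for all t ≥ 0 and satisfies (x(t), y(t)) → (0, 0) as t → ∞. -/
/-!
In the coordinates `x` and `z = y + 2x²` (the distance to the parabola approximating the centre
manifold) the system reads `ẋ = x (z - x²)`, `ż = -z + 4x²z - 4x⁴`, so the Lyapunov function
`V = (x² + z²) / 2` satisfies `V̇ = -x⁴ + x²z - z² + 4x²z² - 4x⁴z ≤ -(x⁴ + z²) / 20 ≤ -V² / 10`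
on the sublevel set `{V ≤ 1/200}`. That set is therefore forward invariant, and on it `V` decays
like `1 / t`. Solutions starting there exist for all time: cutting the field off outside the
unit square makes it globally Lipschitz and bounded, hence globally solvable, and the invariant
sublevel set lies inside the square, where the cut-off is inactive.
-/

open Filter Set Metric Topology
open scoped NNReal

section ProdDeriv

variable {𝕜 E F : Type*} [NontriviallyNormedField 𝕜] [NormedAddCommGroup E] [NormedSpace 𝕜 E]
  [NormedAddCommGroup F] [NormedSpace 𝕜 F] {γ : 𝕜 → E × F} {v : E × F} {t : 𝕜}

theorem HasDerivAt.fst (h : HasDerivAt γ v t) : HasDerivAt (fun s => (γ s).1) v.1 t := by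
  simpa using h.hasFDerivAt.fst.hasDerivAt

theorem HasDerivAt.snd (h : HasDerivAt γ v t) : HasDerivAt (fun s => (γ s).2) v.2 t := by
  simpa using h.hasFDerivAt.snd.hasDerivAt

end ProdDeriv

theorem image_le_of_deriv_lt_deriv_boundary_Ici {f f' B B' : ℝ → ℝ}
    (hf : ∀ t, 0 ≤ t → HasDerivAt f (f' t) t) (hB : ∀ t, 0 ≤ t → HasDerivAt B (B' t) t)
    (h0 : f 0 ≤ B 0) (bound : ∀ t, 0 ≤ t → f t = B t → f' t < B' t) {t : ℝ} (ht : 0 ≤ t) :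
    f t ≤ B t :=
  image_le_of_deriv_right_lt_deriv_boundary' (a := 0) (b := t)
    (fun s hs => (hf s hs.1).continuousAt.continuousWithinAt)
    (fun s hs => (hf s hs.1).hasDerivWithinAt) h0
    (fun s hs => (hB s hs.1).continuousAt.continuousWithinAt)
    (fun s hs => (hB s hs.1).hasDerivWithinAt) (fun s hs => bound s hs.1) ⟨ht, le_rfl⟩

theorem tendsto_zero_of_deriv_le_neg_mul_sq {f f' : ℝ → ℝ} {c : ℝ} (hc : 0 < c)
    (hf : ∀ t, 0 ≤ t → HasDerivAt f (f' t) t) (hf_nonneg : ∀ t, 0 ≤ t → 0 ≤ f t)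
    (hf' : ∀ t, 0 ≤ t → f' t ≤ -c * f t ^ 2) : Tendsto f atTop (𝓝 0) := by
  set β := f 0 + 1
  have hβ : 0 < β := by linarith [hf_nonneg 0 le_rfl]
  -- `B` solves `B' = -(c/2) B²`, so it decays strictly slower than `f` wherever they meet.
  set B : ℝ → ℝ := fun t => β / (1 + c * β / 2 * t)
  have hden : ∀ t, 0 ≤ t → 0 < 1 + c * β / 2 * t := fun t ht => by positivity
  have hB : ∀ t, 0 ≤ t → HasDerivAt B (-(c / 2) * B t ^ 2) t := by
    intro t ht
    refine ((hasDerivAt_const t β).div (((hasDerivAt_id' t).const_mul (c * β / 2)).const_add 1)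
      (hden t ht).ne').congr_deriv ?_
    simp only [B]
    field_simp
    ring
  have hfB : ∀ t, 0 ≤ t → f t ≤ B t := by
    refine fun t ht =>
      image_le_of_deriv_lt_deriv_boundary_Ici hf hB (by simp [B, β]) (fun s hs hfs => ?_) ht
    have hBs : 0 < B s := div_pos hβ (hden s hs)
    calc f' s ≤ -c * B s ^ 2 := hfs ▸ hf' s hs
      _ < -(c / 2) * B s ^ 2 := by nlinarith [sq_pos_of_pos hBs]
  have hBlim : Tendsto B atTop (𝓝 0) :=
    tendsto_const_nhds.div_atTop <| tendsto_atTop_add_const_left _ 1 <|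
      tendsto_id.const_mul_atTop (by positivity : 0 < c * β / 2)
  exact tendsto_of_tendsto_of_tendsto_of_le_of_le' tendsto_const_nhds hBlim
    (eventually_ge_atTop 0 |>.mono hf_nonneg) (eventually_ge_atTop 0 |>.mono hfB)

section GlobalExistence

variable {E : Type*} [NormedAddCommGroup E] [NormedSpace ℝ E] [CompleteSpace E] {v : E → E}
  {K L : ℝ≥0}

theorem exists_forall_mem_Ioo_hasDerivAt_of_lipschitzWith (hv : LipschitzWith K v)
    (hL : ∀ x, ‖v x‖ ≤ L) (x₀ : E) {r : ℝ} (hr : 0 < r) :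
    ∃ γ : ℝ → E, γ 0 = x₀ ∧ ∀ t ∈ Ioo (-r) r, HasDerivAt γ (v (γ t)) t := by
  have hPL : IsPicardLindelof (fun _ => v) (⟨0, by constructor <;> linarith⟩ : Icc (-r) r) x₀
      ⟨L * r, by positivity⟩ 0 L K :=
    .of_time_independent (fun x _ => hL x) hv.lipschitzOnWith <| by
      simp only [sub_zero, sub_neg_eq_add, zero_add, max_self, NNReal.coe_zero]
      exact le_rfl
  obtain ⟨γ, hγ0, hγ⟩ := hPL.exists_eq_forall_mem_Icc_hasDerivWithinAt₀
  exact ⟨γ, hγ0, fun t ht => (hγ t (Ioo_subset_Icc_self ht)).hasDerivAt (Icc_mem_nhds ht.1 ht.2)⟩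

theorem exists_forall_hasDerivAt_of_lipschitzWith (hv : LipschitzWith K v)
    (hL : ∀ x, ‖v x‖ ≤ L) (x₀ : E) :
    ∃ γ : ℝ → E, γ 0 = x₀ ∧ ∀ t, HasDerivAt γ (v (γ t)) t := by
  choose γ hγ0 hγ using fun r : ℝ =>
    exists_forall_mem_Ioo_hasDerivAt_of_lipschitzWith hv hL x₀ (by positivity : 0 < |r| + 1)
  have agree : ∀ r s t, |t| < |r| + 1 → |t| < |s| + 1 → γ r t = γ s t := by
    intro r s t hr hs
    have sub : ∀ q, min (|r| + 1) (|s| + 1) ≤ |q| + 1 →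
        Ioo (-min (|r| + 1) (|s| + 1)) (min (|r| + 1) (|s| + 1)) ⊆ Ioo (-(|q| + 1)) (|q| + 1) :=
      fun q hq => Ioo_subset_Ioo (neg_le_neg hq) hq
    refine ODE_solution_unique_of_mem_Ioo (v := fun _ => v) (s := fun _ => univ) (t₀ := 0)
      (fun _ _ => hv.lipschitzOnWith) (abs_lt.1 (by rw [abs_zero]; positivity))
      (fun u hu => ⟨hγ r u (sub r (min_le_left _ _) hu), trivial⟩)
      (fun u hu => ⟨hγ s u (sub s (min_le_right _ _) hu), trivial⟩)
      ((hγ0 r).trans (hγ0 s).symm) (abs_lt.1 (lt_min hr hs))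
  refine ⟨fun t => γ t t, hγ0 0, fun t => ?_⟩
  have ht : t ∈ Ioo (-(|t| + 1)) (|t| + 1) := abs_lt.1 (lt_add_one _)
  refine (hγ t t ht).congr_of_eventuallyEq ?_
  filter_upwards [Ioo_mem_nhds ht.1 ht.2] with s hs
  exact agree s t s (lt_add_one _) (abs_lt.2 hs)

end GlobalExistence

/-- `ℝ × ℝ` carries the sup norm, so `closedBall 0 1` is the square `[-1, 1]²` and `clamp` is a
1-Lipschitz retraction onto it. -/
noncomputable def clamp (p : ℝ × ℝ) : ℝ × ℝ :=
  (projIcc (-1) 1 (by norm_num) p.1, projIcc (-1) 1 (by norm_num) p.2)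

theorem norm_clamp_le_one (p : ℝ × ℝ) : ‖clamp p‖ ≤ 1 :=
  max_le (abs_le.2 (projIcc (-1 : ℝ) 1 (by norm_num) p.1).2)
    (abs_le.2 (projIcc (-1 : ℝ) 1 (by norm_num) p.2).2)

theorem clamp_of_norm_le_one {p : ℝ × ℝ} (hp : ‖p‖ ≤ 1) : clamp p = p := by
  have h₁ := abs_le.1 ((norm_fst_le p).trans hp)
  have h₂ := abs_le.1 ((norm_snd_le p).trans hp)
  simp [clamp, projIcc_of_mem _ h₁, projIcc_of_mem _ h₂]

theorem lipschitzWith_clamp : LipschitzWith 1 clamp := by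
  have h := (LipschitzWith.subtype_val _).comp
    (LipschitzWith.projIcc (show (-1 : ℝ) ≤ 1 by norm_num))
  unfold clamp
  simpa using (h.comp LipschitzWith.prod_fst).prodMk (h.comp LipschitzWith.prod_snd)

theorem ContDiff.exists_forall_hasDerivAt_comp_clamp {v : ℝ × ℝ → ℝ × ℝ} (hv : ContDiff ℝ 1 v)
    (p₀ : ℝ × ℝ) : ∃ γ : ℝ → ℝ × ℝ, γ 0 = p₀ ∧ ∀ t, HasDerivAt γ (v (clamp (γ t))) t := by
  have hmem : ∀ p, clamp p ∈ closedBall 0 1 :=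
    fun p => mem_closedBall_zero_iff.2 (norm_clamp_le_one p)
  obtain ⟨K, hK⟩ := hv.contDiffOn.exists_lipschitzOnWith one_ne_zero (convex_closedBall 0 1)
    (isCompact_closedBall 0 1)
  obtain ⟨L, hL⟩ := (isCompact_closedBall (0 : ℝ × ℝ) 1).exists_bound_of_continuousOn
    hv.continuous.continuousOn
  exact exists_forall_hasDerivAt_of_lipschitzWith
    (lipschitzOnWith_univ.1 (hK.comp lipschitzWith_clamp.lipschitzOnWith fun p _ => hmem p))
    (L := L.toNNReal) (fun p => (hL _ (hmem p)).trans (Real.le_coe_toNNReal L)) p₀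

def vectorField (p : ℝ × ℝ) : ℝ × ℝ := (p.1 * p.2 + p.1 ^ 3, -p.2 - 2 * p.1 ^ 2)

theorem contDiff_vectorField : ContDiff ℝ 1 vectorField := by
  unfold vectorField; fun_prop

noncomputable def lyapunov (p : ℝ × ℝ) : ℝ := (p.1 ^ 2 + (p.2 + 2 * p.1 ^ 2) ^ 2) / 2

def lyapunovDeriv (p v : ℝ × ℝ) : ℝ :=
  p.1 * v.1 + (p.2 + 2 * p.1 ^ 2) * (v.2 + 4 * p.1 * v.1)

theorem lyapunov_nonneg (p : ℝ × ℝ) : 0 ≤ lyapunov p := by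
  unfold lyapunov; positivity

theorem HasDerivAt.lyapunov_comp {γ : ℝ → ℝ × ℝ} {v : ℝ × ℝ} {t : ℝ} (h : HasDerivAt γ v t) :
    HasDerivAt (fun s => lyapunov (γ s)) (lyapunovDeriv (γ t) v) t := by
  have hx := h.fst
  refine (((hx.pow 2).add ((h.snd.add ((hx.pow 2).const_mul 2)).pow 2)).div_const 2).congr_deriv ?_
  simp only [lyapunovDeriv, Pi.add_apply, Pi.pow_apply]
  ring

theorem norm_le_of_lyapunov (p : ℝ × ℝ) : ‖p‖ ≤ √(2 * lyapunov p) + 4 * lyapunov p := by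
  have hx : p.1 ^ 2 ≤ 2 * lyapunov p := by
    unfold lyapunov; nlinarith [sq_nonneg (p.2 + 2 * p.1 ^ 2)]
  have hz : |p.2 + 2 * p.1 ^ 2| ≤ √(2 * lyapunov p) :=
    Real.abs_le_sqrt (by unfold lyapunov; nlinarith)
  refine max_le ((Real.abs_le_sqrt hx).trans (by linarith [lyapunov_nonneg p])) ?_
  calc |p.2| = |(p.2 + 2 * p.1 ^ 2) - 2 * p.1 ^ 2| := by ring_nf
    _ ≤ |p.2 + 2 * p.1 ^ 2| + |2 * p.1 ^ 2| := abs_sub _ _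
    _ ≤ √(2 * lyapunov p) + 4 * lyapunov p := by
      rw [abs_of_nonneg (by positivity : (0 : ℝ) ≤ 2 * p.1 ^ 2)]; linarith

theorem norm_le_one_of_lyapunov_le {p : ℝ × ℝ} (hp : lyapunov p ≤ 1 / 200) : ‖p‖ ≤ 1 := by
  have hsqrt : √(2 * lyapunov p) ≤ 1 / 2 := (Real.sqrt_le_left (by norm_num)).2 (by linarith)
  linarith [norm_le_of_lyapunov p]

theorem lyapunov_le_of_norm_lt {p : ℝ × ℝ} (hp : ‖p‖ < 1 / 20) : lyapunov p ≤ 1 / 200 := by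
  obtain ⟨hx, hx'⟩ := abs_lt.1 ((norm_fst_le p).trans_lt hp)
  obtain ⟨hy, hy'⟩ := abs_lt.1 ((norm_snd_le p).trans_lt hp)
  have hx2 : p.1 ^ 2 ≤ 1 / 400 := by nlinarith
  have hz2 : (p.2 + 2 * p.1 ^ 2) ^ 2 ≤ (11 / 200) ^ 2 :=
    sq_le_sq' (by nlinarith [sq_nonneg p.1]) (by linarith)
  unfold lyapunov
  linarith

theorem lyapunovDeriv_vectorField_le {p : ℝ × ℝ} (hp : lyapunov p ≤ 1 / 200) :
    lyapunovDeriv p (vectorField p) ≤ -(1 / 10) * lyapunov p ^ 2 := by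
  obtain ⟨x, y⟩ := p
  obtain ⟨z, rfl⟩ : ∃ z, y = z - 2 * x ^ 2 := ⟨y + 2 * x ^ 2, by ring⟩
  have hV : lyapunov (x, z - 2 * x ^ 2) = (x ^ 2 + z ^ 2) / 2 := by simp only [lyapunov]; ring
  have hV' : lyapunovDeriv (x, z - 2 * x ^ 2) (vectorField (x, z - 2 * x ^ 2)) =
      -x ^ 4 + x ^ 2 * z - z ^ 2 + 4 * x ^ 2 * z ^ 2 - 4 * x ^ 4 * z := by
    simp only [lyapunovDeriv, vectorField]; ring
  rw [hV] at hp ⊢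
  rw [hV']
  have hx2 : x ^ 2 ≤ 1 / 100 := by nlinarith [sq_nonneg z]
  have hz2 : z ^ 2 ≤ 1 / 100 := by nlinarith [sq_nonneg x]
  have hz : -(1 / 10) ≤ z := by nlinarith
  have decay : -x ^ 4 + x ^ 2 * z - z ^ 2 + 4 * x ^ 2 * z ^ 2 - 4 * x ^ 4 * z ≤
      -(1 / 20) * (x ^ 4 + z ^ 2) := by
    nlinarith [sq_nonneg (x ^ 2 - z),
      mul_nonneg (sq_nonneg z) (by linarith : (0 : ℝ) ≤ 1 / 100 - x ^ 2),
      mul_nonneg (sq_nonneg (x ^ 2)) (by linarith : (0 : ℝ) ≤ 1 / 10 + z)]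
  have hsq : (x ^ 2 + z ^ 2) ^ 2 ≤ 2 * (x ^ 4 + z ^ 2) := by
    nlinarith [sq_nonneg (x ^ 2 - z ^ 2), mul_le_mul_of_nonneg_left hz2 (sq_nonneg z)]
  nlinarith

theorem lyapunov_le_of_hasDerivAt {γ γ' : ℝ → ℝ × ℝ} (h0 : lyapunov (γ 0) ≤ 1 / 200)
    (hγ : ∀ t, 0 ≤ t → HasDerivAt γ (γ' t) t)
    (hγ' : ∀ t, 0 ≤ t → ‖γ t‖ ≤ 1 → γ' t = vectorField (γ t)) {t : ℝ} (ht : 0 ≤ t) :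
    lyapunov (γ t) ≤ 1 / 200 := by
  refine image_le_of_deriv_lt_deriv_boundary_Ici (B' := fun _ => 0)
    (fun s hs => (hγ s hs).lyapunov_comp) (fun s _ => hasDerivAt_const s _) h0
    (fun s hs hV => ?_) ht
  rw [hγ' s hs (norm_le_one_of_lyapunov_le hV.le)]
  have := lyapunovDeriv_vectorField_le hV.le
  rw [hV] at this
  linarith

theorem tendsto_zero_of_hasDerivAt_vectorField {γ : ℝ → ℝ × ℝ}
    (hγ : ∀ t, 0 ≤ t → HasDerivAt γ (vectorField (γ t)) t) (h0 : lyapunov (γ 0) ≤ 1 / 200) :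
    Tendsto γ atTop (𝓝 0) := by
  have hV : Tendsto (fun t => lyapunov (γ t)) atTop (𝓝 0) :=
    tendsto_zero_of_deriv_le_neg_mul_sq (by norm_num : (0 : ℝ) < 1 / 10)
      (fun t ht => (hγ t ht).lyapunov_comp) (fun t _ => lyapunov_nonneg _)
      (fun t ht => lyapunovDeriv_vectorField_le
        (lyapunov_le_of_hasDerivAt h0 hγ (fun _ _ _ => rfl) ht))
  have hbound : Tendsto (fun t => √(2 * lyapunov (γ t)) + 4 * lyapunov (γ t)) atTop (𝓝 0) := by
    simpa using (hV.const_mul 2).sqrt.add (hV.const_mul 4)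
  exact squeeze_zero_norm (fun t => norm_le_of_lyapunov (γ t)) hbound

theorem exists_hasDerivAt_vectorField {p₀ : ℝ × ℝ} (h0 : lyapunov p₀ ≤ 1 / 200) :
    ∃ γ : ℝ → ℝ × ℝ, γ 0 = p₀ ∧ ∀ t, 0 ≤ t → HasDerivAt γ (vectorField (γ t)) t := by
  obtain ⟨γ, hγ0, hγ⟩ := contDiff_vectorField.exists_forall_hasDerivAt_comp_clamp p₀
  have hclamp : ∀ t, ‖γ t‖ ≤ 1 → vectorField (clamp (γ t)) = vectorField (γ t) :=
    fun t h => by rw [clamp_of_norm_le_one h]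
  refine ⟨γ, hγ0, fun t ht => ?_⟩
  have hV := lyapunov_le_of_hasDerivAt (hγ0 ▸ h0) (fun s _ => hγ s) (fun s _ => hclamp s) ht
  simpa only [hclamp t (norm_le_one_of_lyapunov_le hV)] using hγ t

/-- The origin is an asymptotically stable equilibrium of `ẋ = xy + x³`,
`ẏ = −y − 2x²`: there is a `δ > 0` such that every solution with
`‖(x 0, y 0)‖ < δ` exists for all `t ≥ 0` and tends to `(0, 0)` as `t → ∞`. -/
theorem origin_asymptotically_stable_via_centre_manifold :
    ∃ δ > (0 : ℝ),
      (∀ x₀ y₀ : ℝ, ‖((x₀, y₀) : ℝ × ℝ)‖ < δ →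
        ∃ x y : ℝ → ℝ, x 0 = x₀ ∧ y 0 = y₀ ∧
          (∀ t : ℝ, 0 ≤ t →
            HasDerivAt x (x t * y t + (x t) ^ 3) t ∧
            HasDerivAt y (-(y t) - 2 * (x t) ^ 2) t)) ∧
      (∀ x y : ℝ → ℝ,
        (∀ t : ℝ, 0 ≤ t → HasDerivAt x (x t * y t + (x t) ^ 3) t) →
        (∀ t : ℝ, 0 ≤ t → HasDerivAt y (-(y t) - 2 * (x t) ^ 2) t) →
        ‖((x 0, y 0) : ℝ × ℝ)‖ < δ →
        Tendsto (fun t => (x t, y t)) atTop (nhds ((0 : ℝ), (0 : ℝ)))) := by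
  refine ⟨1 / 20, by norm_num, fun x₀ y₀ h => ?_, fun x y hx hy h => ?_⟩
  · obtain ⟨γ, hγ0, hγ⟩ := exists_hasDerivAt_vectorField (lyapunov_le_of_norm_lt h)
    exact ⟨fun t => (γ t).1, fun t => (γ t).2, by simp [hγ0], by simp [hγ0],
      fun t ht => ⟨(hγ t ht).fst, (hγ t ht).snd⟩⟩
  · exact tendsto_zero_of_hasDerivAt_vectorField (fun t ht => (hx t ht).prodMk (hy t ht))
      (lyapunov_le_of_norm_lt h)
end

section
/- The near-identity coordinate transformation T(X, Y) = (X + XY + (3/2)XY², Y + X² + 2Y² + 4Y³) conjugates the vector field F(x, y) = (−x y, −y + x² − 2y²) to its normal form G(X, Y) = (−X³, −Y − 2X²Y) up to fourth order: F(T(X, Y)) − DT(X, Y)·G(X, Y) = O(‖(X, Y)‖⁴) as (X, Y) → (0, 0), where DT denotes the Jacobian matrix of T. -/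
open Asymptotics Topology

/-! With the Jacobian of `T` written out, `F ∘ T - DT · G` is an explicit polynomial map. The
coefficients of `T` are exactly those that cancel all its monomials of degree at most three, and a
monomial `x ^ i * y ^ j` is `O(‖(x, y)‖ ^ (i + j))` at the origin. -/

theorem isBigO_norm_pow_of_le {E : Type*} [SeminormedAddCommGroup E] {m n : ℕ} (h : m ≤ n) :
    (fun x : E => ‖x‖ ^ n) =O[𝓝 0] fun x => ‖x‖ ^ m := by
  rcases h.eq_or_lt with rfl | h
  · exact isBigO_refl _ _
  · exact (isLittleO_pow_pow h).isBigO.comp_tendsto tendsto_norm_zero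

theorem isBigO_fst_pow_mul_snd_pow {R : Type*} [SeminormedRing R] [NormOneClass R] {n i j : ℕ}
    (h : n ≤ i + j) :
    (fun p : R × R => p.1 ^ i * p.2 ^ j) =O[𝓝 0] fun p => ‖p‖ ^ n := by
  have hfst : (fun p : R × R => p.1) =O[𝓝 0] fun p => ‖p‖ := isBigO_fst_prod'.norm_right
  have hsnd : (fun p : R × R => p.2) =O[𝓝 0] fun p => ‖p‖ := isBigO_snd_prod'.norm_right
  refine ((hfst.pow i).mul (hsnd.pow j)).trans ?_
  simpa only [← pow_add] using isBigO_norm_pow_of_le h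

open ContinuousLinearMap in
noncomputable def transformJacobian (p : ℝ × ℝ) : ℝ × ℝ →L[ℝ] ℝ × ℝ :=
  ((1 + p.2 + 3 / 2 * p.2 ^ 2) • fst ℝ ℝ ℝ + (p.1 + 3 * p.1 * p.2) • snd ℝ ℝ ℝ).prod
    ((2 * p.1) • fst ℝ ℝ ℝ + (1 + 4 * p.2 + 12 * p.2 ^ 2) • snd ℝ ℝ ℝ)

theorem hasFDerivAt_transform {T : ℝ × ℝ → ℝ × ℝ}
    (hT : ∀ p : ℝ × ℝ, T p =
      (p.1 + p.1 * p.2 + (3 / 2) * p.1 * p.2 ^ 2, p.2 + p.1 ^ 2 + 2 * p.2 ^ 2 + 4 * p.2 ^ 3))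
    (p : ℝ × ℝ) : HasFDerivAt T (transformJacobian p) p := by
  rw [show T = _ from funext hT]
  have hx : HasFDerivAt (fun q : ℝ × ℝ => q.1) (ContinuousLinearMap.fst ℝ ℝ ℝ) p :=
    hasFDerivAt_fst
  have hy : HasFDerivAt (fun q : ℝ × ℝ => q.2) (ContinuousLinearMap.snd ℝ ℝ ℝ) p :=
    hasFDerivAt_snd
  refine (((hx.add (hx.mul hy)).add ((hx.const_mul (3 / 2)).mul (hy.pow 2))).prodMk
    (((hy.add (hx.pow 2)).add ((hy.pow 2).const_mul 2)).add ((hy.pow 3).const_mul 4)))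
    |>.congr_fderiv ?_
  ext <;> simp [transformJacobian] <;> ring

noncomputable def conjugationDefect (p : ℝ × ℝ) : ℝ × ℝ :=
  (2 * p.1 ^ 3 * p.2 + 6 * p.1 ^ 3 * p.2 ^ 2 - 15 / 2 * p.1 * p.2 ^ 3 - 7 * p.1 * p.2 ^ 4
      - 6 * p.1 * p.2 ^ 5,
    4 * p.1 ^ 2 * p.2 ^ 2 + 11 * p.1 ^ 2 * p.2 ^ 3 + 9 / 4 * p.1 ^ 2 * p.2 ^ 4 - 24 * p.2 ^ 4
      - 32 * p.2 ^ 5 - 32 * p.2 ^ 6)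

theorem conjugationDefect_isBigO : conjugationDefect =O[𝓝 0] fun p => ‖p‖ ^ 4 := by
  have monomial (c : ℝ) (i j : ℕ) (h : 4 ≤ i + j) :=
    (isBigO_fst_pow_mul_snd_pow h).const_mul_left c
  refine IsBigO.prod_left ?_ ?_
  · refine IsBigO.congr_left ((monomial 2 3 1 le_rfl).add (monomial 6 3 2 (by norm_num))
      |>.sub (monomial (15 / 2) 1 3 le_rfl) |>.sub (monomial 7 1 4 (by norm_num))
      |>.sub (monomial 6 1 5 (by norm_num))) fun p => by ring
  · refine IsBigO.congr_left ((monomial 4 2 2 le_rfl).add (monomial 11 2 3 (by norm_num))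
      |>.add (monomial (9 / 4) 2 4 (by norm_num)) |>.sub (monomial 24 0 4 le_rfl)
      |>.sub (monomial 32 0 5 (by norm_num)) |>.sub (monomial 32 0 6 (by norm_num)))
      fun p => by ring

theorem comp_sub_fderiv_eq_conjugationDefect {T F G : ℝ × ℝ → ℝ × ℝ}
    (hT : ∀ p : ℝ × ℝ, T p =
      (p.1 + p.1 * p.2 + (3 / 2) * p.1 * p.2 ^ 2, p.2 + p.1 ^ 2 + 2 * p.2 ^ 2 + 4 * p.2 ^ 3))
    (hF : ∀ p : ℝ × ℝ, F p = (-p.1 * p.2, -p.2 + p.1 ^ 2 - 2 * p.2 ^ 2))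
    (hG : ∀ p : ℝ × ℝ, G p = (-p.1 ^ 3, -p.2 - 2 * p.1 ^ 2 * p.2)) (p : ℝ × ℝ) :
    F (T p) - fderiv ℝ T p (G p) = conjugationDefect p := by
  rw [(hasFDerivAt_transform hT p).fderiv, hT, hF, hG]
  ext <;> simp [transformJacobian, conjugationDefect] <;> ring

/-- The near-identity transformation
`T (X, Y) = (X + XY + (3/2)XY², Y + X² + 2Y² + 4Y³)` conjugates the vector field
`F (x, y) = (−xy, −y + x² − 2y²)` to its normal form
`G (X, Y) = (−X³, −Y − 2X²Y)` up to fourth order: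
`F ∘ T − (DT)·G = O(‖(X, Y)‖⁴)` as `(X, Y) → 0`. -/
theorem normal_form_conjugation_fourth_order
    (T F G : ℝ × ℝ → ℝ × ℝ)
    (hT : ∀ p : ℝ × ℝ, T p =
      (p.1 + p.1 * p.2 + (3 / 2) * p.1 * p.2 ^ 2,
       p.2 + p.1 ^ 2 + 2 * p.2 ^ 2 + 4 * p.2 ^ 3))
    (hF : ∀ p : ℝ × ℝ, F p = (-p.1 * p.2, -p.2 + p.1 ^ 2 - 2 * p.2 ^ 2))
    (hG : ∀ p : ℝ × ℝ, G p = (-p.1 ^ 3, -p.2 - 2 * p.1 ^ 2 * p.2)) :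
    (fun p : ℝ × ℝ => F (T p) - fderiv ℝ T p (G p)) =O[𝓝 0] fun p => ‖p‖ ^ 4 :=
  conjugationDefect_isBigO.congr_left fun p =>
    (comp_sub_fderiv_eq_conjugationDefect hT hF hG p).symm
end
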